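/- arXiv:2210.11201 — 6 statements merged into one kernel-verified Lean document; each statement's English description precedes it below -/
import Mathlib

section
/- Cocoercivity of Lipschitz gradients of convex functions (Baillon–Haddad): if Ω : E → ℝ is convex and differentiable with L-Lipschitz gradient (L > 0), then for all x, y ∈ E: ‖∇Ω(x) − ∇Ω(y)‖² ≤ L·⟨∇Ω(x) − ∇Ω(y), x − y⟩. -/
/-!
Convexity gives the lower bound `f z ≥ f x + ⟪∇f x, z - x⟫`, and the `L`-Lipschitz gradient gives
the quadratic upper bound `f z ≤ f y + ⟪∇f y, z - y⟫ + L / 2 * ‖z - y‖²`. Chaining the two at the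
minimiser `z = y - L⁻¹ • (∇f y - ∇f x)` of the upper bound yields
`f x + ⟪∇f x, y - x⟫ + ‖∇f y - ∇f x‖² / (2 * L) ≤ f y`; adding this to the same inequality with
`x` and `y` exchanged gives cocoercivity.
-/

open RealInnerProductSpace Set

section

variable {E : Type*} [NormedAddCommGroup E] [InnerProductSpace ℝ E] [CompleteSpace E]
  {f : E → ℝ} {f' : E → E} {L : ℝ}

theorem HasGradientAt.hasDerivAt_comp_add_smul {g x v : E} {t : ℝ}
    (hf : HasGradientAt f g (x + t • v)) :
    HasDerivAt (fun s : ℝ => f (x + s • v)) ⟪g, v⟫ t := by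
  have hline : HasDerivAt (fun s : ℝ => x + s • v) v t := by
    simpa using ((hasDerivAt_id t).smul_const v).const_add x
  simpa [Function.comp_def, InnerProductSpace.toDual_apply_apply] using
    (hasGradientAt_iff_hasFDerivAt.mp hf).comp_hasDerivAt t hline

theorem ConvexOn.add_inner_le_of_hasGradientAt (hconv : ConvexOn ℝ univ f) {g x : E}
    (hf : HasGradientAt f g x) (y : E) :
    f x + ⟪g, y - x⟫ ≤ f y := by
  have hline : ConvexOn ℝ univ (fun t : ℝ => f (x + t • (y - x))) := by
    simpa [Function.comp_def, AffineMap.lineMap_apply, add_comm] using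
      (hconv.comp_affineMap (AffineMap.lineMap x y)).subset (subset_univ _) convex_univ
  have h := hline.le_slope_of_hasDerivAt (mem_univ 0) (mem_univ 1) one_pos
    (HasGradientAt.hasDerivAt_comp_add_smul (by simpa using hf))
  simp only [slope, zero_smul, add_zero, one_smul, add_sub_cancel, sub_zero, inv_one,
    smul_eq_mul, one_mul, vsub_eq_sub] at h
  linarith

theorem le_add_inner_add_sq_of_lipschitz_gradient (hf : ∀ x, HasGradientAt f (f' x) x)
    (hlip : ∀ x y, ‖f' x - f' y‖ ≤ L * ‖x - y‖) (x y : E) :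
    f y ≤ f x + ⟪f' x, y - x⟫ + L / 2 * ‖y - x‖ ^ 2 := by
  set v := y - x
  have hderiv (t : ℝ) : HasDerivAt (fun s : ℝ => f (x + s • v) - s * ⟪f' x, v⟫)
      ⟪f' (x + t • v) - f' x, v⟫ t := by
    rw [inner_sub_left]
    exact (hf _).hasDerivAt_comp_add_smul.sub (hasDerivAt_mul_const _)
  have hbound (t : ℝ) (ht : 0 ≤ t) : ⟪f' (x + t • v) - f' x, v⟫ ≤ L * ‖v‖ ^ 2 * t :=
    calc ⟪f' (x + t • v) - f' x, v⟫ ≤ ‖f' (x + t • v) - f' x‖ * ‖v‖ := real_inner_le_norm _ _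
      _ ≤ L * ‖t • v‖ * ‖v‖ := by
          gcongr
          simpa using hlip (x + t • v) x
      _ = L * ‖v‖ ^ 2 * t := by rw [norm_smul, Real.norm_of_nonneg ht]; ring
  have hquad (t : ℝ) : HasDerivAt (fun s : ℝ => f x + L / 2 * ‖v‖ ^ 2 * s ^ 2)
      (L * ‖v‖ ^ 2 * t) t :=
    (((hasDerivAt_pow 2 t).const_mul _).const_add _).congr_deriv (by push_cast; ring)
  have h := image_le_of_deriv_right_le_deriv_boundary
    (fun t _ => (hderiv t).continuousAt.continuousWithinAt)
    (fun t _ => (hderiv t).hasDerivWithinAt) (by simp)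
    (fun t _ => (hquad t).continuousAt.continuousWithinAt)
    (fun t _ => (hquad t).hasDerivWithinAt) (fun t ht => hbound t ht.1)
    (right_mem_Icc.mpr zero_le_one)
  simp only [one_smul, one_mul, one_pow, mul_one, v, add_sub_cancel] at h
  linarith

theorem ConvexOn.add_inner_add_sq_div_le_of_lipschitz_gradient (hconv : ConvexOn ℝ univ f)
    (hf : ∀ x, HasGradientAt f (f' x) x) (hL : 0 < L)
    (hlip : ∀ x y, ‖f' x - f' y‖ ≤ L * ‖x - y‖) (x y : E) :
    f x + ⟪f' x, y - x⟫ + ‖f' y - f' x‖ ^ 2 / (2 * L) ≤ f y := by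
  set u := f' y - f' x
  set z := y - L⁻¹ • u
  have hlower := hconv.add_inner_le_of_hasGradientAt (hf x) z
  have hupper := le_add_inner_add_sq_of_lipschitz_gradient hf hlip y z
  have hzx : ⟪f' x, z - x⟫ = ⟪f' x, y - x⟫ - L⁻¹ * ⟪f' x, u⟫ := by
    rw [show z - x = (y - x) - L⁻¹ • u by simp only [z]; abel, inner_sub_right,
      real_inner_smul_right]
  have hzy : ⟪f' y, z - y⟫ = -(L⁻¹ * ⟪f' y, u⟫) := by
    rw [show z - y = -(L⁻¹ • u) by simp only [z]; abel, inner_neg_right, real_inner_smul_right]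
  have hnorm : ‖z - y‖ = L⁻¹ * ‖u‖ := by
    rw [show z - y = -(L⁻¹ • u) by simp only [z]; abel, norm_neg, norm_smul,
      Real.norm_of_nonneg (inv_nonneg.mpr hL.le)]
  have hgap : L⁻¹ * ⟪f' y, u⟫ - L⁻¹ * ⟪f' x, u⟫ = L⁻¹ * ‖u‖ ^ 2 := by
    rw [← mul_sub, ← inner_sub_left, real_inner_self_eq_norm_sq]
  have hquad : L / 2 * (L⁻¹ * ‖u‖) ^ 2 = L⁻¹ * ‖u‖ ^ 2 - ‖u‖ ^ 2 / (2 * L) := by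
    field_simp
    ring
  rw [hzx] at hlower
  rw [hzy, hnorm, hquad] at hupper
  linarith

end

/-- Baillon–Haddad: cocoercivity of the `L`-Lipschitz gradient of a convex
function: `‖∇Ω x - ∇Ω y‖² ≤ L * ⟪∇Ω x - ∇Ω y, x - y⟫`. -/
theorem baillon_haddad_cocoercivity
    {E : Type*} [NormedAddCommGroup E] [InnerProductSpace ℝ E] [CompleteSpace E]
    (Ω : E → ℝ) (gΩ : E → E) (hΩ : ∀ x, HasGradientAt Ω (gΩ x) x)
    (hconv : ConvexOn ℝ Set.univ Ω)
    (L : ℝ) (hL : 0 < L)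
    (hlip : ∀ x y, ‖gΩ x - gΩ y‖ ≤ L * ‖x - y‖)
    (x y : E) :
    ‖gΩ x - gΩ y‖ ^ 2 ≤ L * ⟪gΩ x - gΩ y, x - y⟫ := by
  have hxy := hconv.add_inner_add_sq_div_le_of_lipschitz_gradient hΩ hL hlip x y
  have hyx := hconv.add_inner_add_sq_div_le_of_lipschitz_gradient hΩ hL hlip y x
  rw [norm_sub_rev] at hxy
  have hinner : ⟪gΩ x - gΩ y, x - y⟫ = -⟪gΩ x, y - x⟫ - ⟪gΩ y, x - y⟫ := by
    rw [inner_sub_left, ← neg_sub y x, inner_neg_right]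
  have hhalves : ‖gΩ x - gΩ y‖ ^ 2 / (2 * L) + ‖gΩ x - gΩ y‖ ^ 2 / (2 * L)
      = ‖gΩ x - gΩ y‖ ^ 2 / L := by
    field_simp
    ring
  have hcoco : ‖gΩ x - gΩ y‖ ^ 2 / L ≤ ⟪gΩ x - gΩ y, x - y⟫ := by linarith
  exact (div_le_iff₀' hL).mp hcoco
end

section
/- Lower-bound recurrence (deterministic core of Theorem 1(a)): let a, b > 0, let n ≤ T be natural numbers, let η : ℕ → ℝ and B : ℕ → ℝ with B_t ≥ 0 for all t. Suppose that for every t with n ≤ t ≤ T we have 0 < a·η_t ≤ 1 and B_{t+1} ≥ (1 − a·η_t)·B_t + b·η_t². Then B_{T+1} ≥ b·η_n² / (T − n + 1). -/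
lemma key_step (c K γ x m : ℝ) (hc : 0 < c) (hK : 0 < K) (hKc : K ≤ c)
    (hγ0 : 0 < γ) (hγ1 : γ ≤ 1) (hm : 1 ≤ m) (hx0 : 0 ≤ x) (hx : K / m ≤ x) :
    K / (m + 1) ≤ (1 - γ) * x + c * γ ^ 2 := by
  have hm0 : 0 < m := by linarith
  rw [div_le_iff₀ (by linarith)]
  rw [div_le_iff₀ hm0] at hx
  rcases le_or_gt x (2 * c) with hx2 | hx2
  · nlinarith [sq_nonneg (2 * c * γ - x), mul_nonneg (by linarith : (0:ℝ) ≤ x * m - K)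
      (by nlinarith : (0:ℝ) ≤ 4 * c * m - x * m - K), mul_nonneg (by linarith : (0:ℝ) ≤ c - K)
      (by linarith : (0:ℝ) ≤ m - 1), sq_nonneg (m - 1), sq_nonneg γ]
  · nlinarith [mul_nonneg (mul_nonneg (by linarith : (0:ℝ) ≤ 1 - γ)
      (by linarith : (0:ℝ) ≤ x - 2 * c)) (by linarith : (0:ℝ) ≤ m + 1),
      mul_nonneg (sq_nonneg (1 - γ)) (by linarith : (0:ℝ) ≤ m + 1),
      mul_nonneg hc.le (by linarith : (0:ℝ) ≤ m - 1)]

/-- Lower-bound recurrence (deterministic core of Theorem 1(a)): if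
`B (t+1) ≥ (1 - a * η t) * B t + b * η t ^ 2` with `0 < a * η t ≤ 1` on
`n ≤ t ≤ T`, then `B (T+1) ≥ b * η n ^ 2 / (T - n + 1)`. -/
theorem lower_bound_recurrence (a b : ℝ) (ha : 0 < a) (hb : 0 < b)
    (n T : ℕ) (hnT : n ≤ T) (η B : ℕ → ℝ)
    (hB : ∀ t, 0 ≤ B t)
    (hη : ∀ t, n ≤ t → t ≤ T → 0 < a * η t ∧ a * η t ≤ 1)
    (hrec : ∀ t, n ≤ t → t ≤ T → (1 - a * η t) * B t + b * η t ^ 2 ≤ B (t + 1)) :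
    b * η n ^ 2 / ((T : ℝ) - (n : ℝ) + 1) ≤ B (T + 1) := by
  set K : ℝ := b * η n ^ 2 with hKdef
  set c : ℝ := b / a ^ 2 with hcdef
  have hc : 0 < c := div_pos hb (by positivity)
  obtain ⟨hγn0, hγn1⟩ := hη n le_rfl hnT
  have hηn : η n ≠ 0 := fun h => by simp [h] at hγn0
  have hK : 0 < K := by positivity
  have hKc : K ≤ c := by
    rw [hKdef, hcdef, le_div_iff₀ (by positivity)]
    have h2 : (a * η n) ^ 2 ≤ 1 := by nlinarith
    nlinarith [hb.le]
  have hcγ : ∀ t, c * (a * η t) ^ 2 = b * η t ^ 2 := by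
    intro t; rw [hcdef]; field_simp
  have main : ∀ k : ℕ, n + k ≤ T → K / ((k : ℝ) + 1) ≤ B (n + k + 1) := by
    intro k
    induction k with
    | zero =>
      intro _
      have h := hrec n le_rfl hnT
      push_cast
      calc K / (0 + 1) = K := by ring
        _ ≤ (1 - a * η n) * B n + b * η n ^ 2 := by
            nlinarith [mul_nonneg (by linarith : (0:ℝ) ≤ 1 - a * η n) (hB n)]
        _ ≤ B (n + 0 + 1) := by simpa using h
    | succ k ih =>
      intro hk
      have hk' : n + k ≤ T := by omega
      have ht1 : n ≤ n + k + 1 := by omega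
      have ht2 : n + k + 1 ≤ T := by omega
      obtain ⟨hγ0, hγ1⟩ := hη (n + k + 1) ht1 ht2
      have h := hrec (n + k + 1) ht1 ht2
      have hih := ih hk'
      have hkey := key_step c K (a * η (n + k + 1)) (B (n + k + 1)) ((k : ℝ) + 1)
        hc hK hKc hγ0 hγ1 (by have := Nat.cast_nonneg (α := ℝ) k; linarith) (hB _) (by exact hih)
      rw [hcγ] at hkey
      push_cast
      calc K / ((k : ℝ) + 1 + 1) ≤ (1 - a * η (n + k + 1)) * B (n + k + 1)
          + b * η (n + k + 1) ^ 2 := hkey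
        _ ≤ B (n + (k + 1) + 1) := by
            have : n + (k + 1) + 1 = (n + k + 1) + 1 := by omega
            rw [this]; exact h
  have := main (T - n) (by omega)
  have hTn : n + (T - n) = T := by omega
  rw [hTn] at this
  have hcast : ((T - n : ℕ) : ℝ) + 1 = (T : ℝ) - (n : ℝ) + 1 := by
    rw [Nat.cast_sub hnT]
  rwa [hcast] at this
end

section
/- Recurrence convergence (deterministic core of the sufficiency direction of Theorem 1 and Lemma 7): let z ≥ 0 and let η : ℕ → ℝ and A : ℕ → ℝ satisfy A_t ≥ 0, 0 < η_t ≤ 2 for all t, η_t → 0 as t → ∞, Σ_{t=1}^{∞} η_t = ∞, and A_{t+1} ≤ (1 − η_t/2)·A_t + z·η_t² for all t. Then A_t → 0 as t → ∞. -/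
/-!
Fix a level `B > 0`. Once `z * η t ≤ B / 4`, the recurrence makes `A` drop by at least
`η t * B / 4` at every step where `A t > B`, and it can never push `A` from below `B` to above
it. Since `∑ η t = ∞` and `A ≥ 0`, the drops cannot go on forever, so `A` eventually enters
`[0, B]` and stays there.
-/

open Filter Finset

section Descent

variable {A u : ℕ → ℝ} {B c : ℝ} {T : ℕ}

theorem exists_ge_le_of_descent (hA : BddBelow (Set.range A)) (hc : 0 < c)
    (hu : Tendsto (fun n => ∑ t ∈ range n, u t) atTop atTop)
    (hdesc : ∀ t ≥ T, B < A t → A (t + 1) ≤ A t - c * u t) :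
    ∃ t ≥ T, A t ≤ B := by
  by_contra! hgt
  obtain ⟨m, hm⟩ := hA
  have hpot : ∀ t ≥ T, A t + c * ∑ i ∈ range t, u i ≤ A T + c * ∑ i ∈ range T, u i := by
    intro t ht
    induction t, ht using Nat.le_induction with
    | base => exact le_rfl
    | succ t ht ih =>
      rw [sum_range_succ]
      linarith [hdesc t ht (hgt t ht)]
  obtain ⟨t, hbig, ht⟩ := ((hu.const_mul_atTop hc).eventually_gt_atTop
    (A T + c * ∑ i ∈ range T, u i - m)).and (eventually_ge_atTop T) |>.exists
  linarith [hpot t ht, hm ⟨t, rfl⟩]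

theorem eventually_le_of_descent (hA : BddBelow (Set.range A)) (hc : 0 < c)
    (hu : Tendsto (fun n => ∑ t ∈ range n, u t) atTop atTop)
    (hdesc : ∀ t ≥ T, B < A t → A (t + 1) ≤ A t - c * u t)
    (hstay : ∀ t ≥ T, A t ≤ B → A (t + 1) ≤ B) :
    ∀ᶠ t in atTop, A t ≤ B := by
  obtain ⟨t₀, ht₀T, ht₀⟩ := exists_ge_le_of_descent hA hc hu hdesc
  refine eventually_atTop.2 ⟨t₀, fun t ht => ?_⟩
  induction t, ht using Nat.le_induction with
  | base => exact ht₀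
  | succ t ht ih => exact hstay t (ht₀T.trans ht) ih

end Descent

section Step

variable {a a' η z B : ℝ}

theorem step_le_sub_of_lt (hη : 0 ≤ η) (hzη : z * η ≤ B / 4)
    (hrec : a' ≤ (1 - η / 2) * a + z * η ^ 2) (ha : B < a) :
    a' ≤ a - B / 4 * η := by
  have hnoise : z * η ^ 2 ≤ B / 4 * η := by nlinarith
  nlinarith

theorem step_le_of_le (hB : 0 ≤ B) (hη : 0 ≤ η) (hη2 : η ≤ 2) (hzη : z * η ≤ B / 4)
    (hrec : a' ≤ (1 - η / 2) * a + z * η ^ 2) (ha : a ≤ B) :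
    a' ≤ B := by
  have hnoise : z * η ^ 2 ≤ B / 4 * η := by nlinarith
  have hcontract : (1 - η / 2) * a ≤ (1 - η / 2) * B :=
    mul_le_mul_of_nonneg_left ha (by linarith)
  nlinarith [mul_nonneg hB hη]

end Step

theorem recurrence_convergence_general (z : ℝ) (η A : ℕ → ℝ)
    (hA : ∀ t, 0 ≤ A t)
    (hη : ∀ t, 0 < η t ∧ η t ≤ 2)
    (hη0 : Filter.Tendsto η Filter.atTop (nhds 0))
    (hdiv : Filter.Tendsto (fun n => ∑ t ∈ Finset.range n, η t)
      Filter.atTop Filter.atTop)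
    (hrec : ∀ t, A (t + 1) ≤ (1 - η t / 2) * A t + z * η t ^ 2) :
    Filter.Tendsto A Filter.atTop (nhds 0) := by
  refine tendsto_order.2 ⟨fun a ha => .of_forall fun t => ha.trans_le (hA t), fun ε hε => ?_⟩
  have hB : 0 < ε / 2 := by positivity
  obtain ⟨T, hT⟩ : ∃ T, ∀ t ≥ T, z * η t < ε / 2 / 4 := eventually_atTop.1 <|
    (hη0.const_mul z).eventually (gt_mem_nhds (by rw [mul_zero]; positivity))
  have hle : ∀ᶠ t in atTop, A t ≤ ε / 2 :=
    eventually_le_of_descent ⟨0, by rintro _ ⟨t, rfl⟩; exact hA t⟩ (by positivity) hdiv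
      (fun t ht => step_le_sub_of_lt (hη t).1.le (hT t ht).le (hrec t))
      (fun t ht => step_le_of_le hB.le (hη t).1.le (hη t).2 (hT t ht).le (hrec t))
  exact hle.mono fun t ht => ht.trans_lt (by linarith)

/-- Recurrence convergence (deterministic core of the sufficiency direction of
Theorem 1 and Lemma 7): if `A (t+1) ≤ (1 - η t / 2) * A t + z * η t ^ 2` with
nonnegative `A`, step sizes `0 < η t ≤ 2` tending to `0` with divergent series,
then `A t → 0`. -/
theorem recurrence_convergence (z : ℝ) (hz : 0 ≤ z) (η A : ℕ → ℝ)
    (hA : ∀ t, 0 ≤ A t)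
    (hη : ∀ t, 0 < η t ∧ η t ≤ 2)
    (hη0 : Filter.Tendsto η Filter.atTop (nhds 0))
    (hdiv : Filter.Tendsto (fun n => ∑ t ∈ Finset.range n, η t)
      Filter.atTop Filter.atTop)
    (hrec : ∀ t, A (t + 1) ≤ (1 - η t / 2) * A t + z * η t ^ 2) :
    Filter.Tendsto A Filter.atTop (nhds 0) :=
  recurrence_convergence_general z η A hA hη hη0 hdiv hrec
end

section
/- O(1/T) rate for step sizes η_t = 4/(t+1) (deterministic core of Theorem 1(b)): let z ≥ 0, let n ≥ 2 be a natural number, and let A : ℕ → ℝ be a nonnegative sequence satisfying A_{t+1} ≤ (1 − 2/(t+1))·A_t + 16·z/(t+1)² for all t ≥ n. Then for every T ≥ n: A_T ≤ (n−1)·n·A_n / ((T−1)·T) + 16·z/T. -/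
/-- `O(1/T)` rate for step sizes `η t = 4/(t+1)` (deterministic core of
Theorem 1(b)): if `A (t+1) ≤ (1 - 2/(t+1)) * A t + 16 * z/(t+1)^2` for all
`t ≥ n` (with `n ≥ 2`), then for every `T ≥ n`,
`A T ≤ (n-1) * n * A n / ((T-1) * T) + 16 * z / T`. -/
theorem rate_one_over_T (z : ℝ) (hz : 0 ≤ z) (n : ℕ) (hn : 2 ≤ n)
    (A : ℕ → ℝ) (hA : ∀ t, 0 ≤ A t)
    (hrec : ∀ t, n ≤ t →
      A (t + 1) ≤ (1 - 2 / ((t : ℝ) + 1)) * A t + 16 * z / ((t : ℝ) + 1) ^ 2) :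
    ∀ T, n ≤ T →
      A T ≤ ((n : ℝ) - 1) * (n : ℝ) * A n / (((T : ℝ) - 1) * (T : ℝ))
        + 16 * z / (T : ℝ) := by
  have hn2 : (2:ℝ) ≤ (n:ℝ) := by exact_mod_cast hn
  have hC : 0 ≤ ((n:ℝ) - 1) * (n:ℝ) * A n :=
    mul_nonneg (by nlinarith) (hA n)
  intro T hT
  induction T, hT using Nat.le_induction with
  | base =>
    have hne1 : ((n:ℝ) - 1) ≠ 0 := ne_of_gt (by linarith)
    have hne2 : (n:ℝ) ≠ 0 := by positivity
    have heq : ((n:ℝ) - 1) * (n:ℝ) * A n / (((n:ℝ) - 1) * (n:ℝ)) = A n := by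
      field_simp
    rw [heq]
    have : 0 ≤ 16 * z / (n:ℝ) := by positivity
    linarith
  | succ T hT IH =>
    have hT2 : (2:ℝ) ≤ (T:ℝ) := le_trans hn2 (by exact_mod_cast hT)
    have ht0 : (0:ℝ) < T := by linarith
    have ht1 : (0:ℝ) < (T:ℝ) - 1 := by linarith
    have ht2 : (0:ℝ) < (T:ℝ) + 1 := by linarith
    have hcoef : (0:ℝ) ≤ 1 - 2 / ((T:ℝ) + 1) := by
      rw [sub_nonneg, div_le_one ht2]; linarith
    have h1 := hrec T hT
    push_cast
    have step : (1 - 2 / ((T:ℝ) + 1)) *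
        (((n:ℝ) - 1) * (n:ℝ) * A n / (((T:ℝ) - 1) * (T:ℝ)) + 16 * z / (T:ℝ))
        + 16 * z / ((T:ℝ) + 1) ^ 2
        ≤ ((n:ℝ) - 1) * (n:ℝ) * A n / (((T:ℝ) + 1 - 1) * ((T:ℝ) + 1))
          + 16 * z / ((T:ℝ) + 1) := by
      rw [show ((T:ℝ) + 1 - 1) = (T:ℝ) by ring]
      have hzpart : 16 * z * ((T:ℝ) - 1) / ((T:ℝ) * ((T:ℝ) + 1))
          + 16 * z / ((T:ℝ) + 1) ^ 2 ≤ 16 * z / ((T:ℝ) + 1) := by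
        rw [div_add_div _ _ (by positivity) (by positivity),
          div_le_div_iff₀ (by positivity) (by positivity)]
        nlinarith
      have eq : (1 - 2 / ((T:ℝ) + 1)) *
          (((n:ℝ) - 1) * (n:ℝ) * A n / (((T:ℝ) - 1) * (T:ℝ)) + 16 * z / (T:ℝ))
          = ((n:ℝ) - 1) * (n:ℝ) * A n / ((T:ℝ) * ((T:ℝ) + 1))
            + 16 * z * ((T:ℝ) - 1) / ((T:ℝ) * ((T:ℝ) + 1)) := by
        field_simp
        ring
      rw [eq]
      linarith
    calc A (T + 1) ≤ (1 - 2 / ((T:ℝ) + 1)) * A T + 16 * z / ((T:ℝ) + 1) ^ 2 := h1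
      _ ≤ (1 - 2 / ((T:ℝ) + 1)) *
            (((n:ℝ) - 1) * (n:ℝ) * A n / (((T:ℝ) - 1) * (T:ℝ)) + 16 * z / (T:ℝ))
            + 16 * z / ((T:ℝ) + 1) ^ 2 := by
          gcongr
      _ ≤ _ := step
end

section
/- Almost-sure convergence under square-summable perturbations (stochastic core of Proposition 1): let (Ω, 𝔉, μ) be a probability space with a filtration (𝔉_t)_{t∈ℕ}, let (X_t)_{t∈ℕ} be a sequence of nonnegative, integrable random variables adapted to (𝔉_t), let c ≥ 0, and let (η_t)_{t∈ℕ} be a real sequence with Σ_{t=1}^{∞} η_t² < ∞. If for every t the conditional expectation satisfies E[X_{t+1} | 𝔉_t] ≤ X_t + c·η_t² almost surely, then (X_t) converges almost surely to a nonnegative random variable X_∞. -/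
open MeasureTheory Filter Topology

/-! Adding the tail `∑_{s ≥ t} c η_s²` to `X_t` absorbs the perturbation and turns `X` into a
nonnegative supermartingale. Its `L¹` norms are bounded by its initial mean, so it converges
almost surely by Doob's convergence theorem, and since the tail tends to `0`, so does `X_t`. -/

theorem tsum_nat_add_eq_add_tsum_nat_add_succ {G : Type*} [AddCommGroup G] [TopologicalSpace G]
    [IsTopologicalAddGroup G] [T2Space G] {a : ℕ → G} (ha : Summable a) (t : ℕ) :
    ∑' s, a (s + t) = a t + ∑' s, a (s + (t + 1)) := by
  rw [((summable_nat_add_iff t).2 ha).tsum_eq_zero_add, zero_add]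
  simp only [add_right_comm _ 1, add_assoc]

namespace MeasureTheory

variable {Ω : Type*} {m : MeasurableSpace Ω} {μ : Measure Ω}

theorem eLpNorm_one_eq_ofReal_integral {f : Ω → ℝ} (hf : Integrable f μ) (h0 : 0 ≤ᵐ[μ] f) :
    eLpNorm f 1 μ = ENNReal.ofReal (∫ ω, f ω ∂μ) := by
  rw [eLpNorm_one_eq_lintegral_enorm, ofReal_integral_eq_lintegral_ofReal hf h0]
  refine lintegral_congr_ae ?_
  filter_upwards [h0] with ω hω using Real.enorm_of_nonneg hω

theorem Supermartingale.eLpNorm_one_le_of_nonneg {ι : Type*} [Preorder ι] {𝔉 : Filtration ι m}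
    [SigmaFiniteFiltration μ 𝔉] {f : ι → Ω → ℝ} (hf : Supermartingale f 𝔉 μ)
    (h0 : ∀ i, 0 ≤ᵐ[μ] f i) {i j : ι} (hij : i ≤ j) :
    eLpNorm (f j) 1 μ ≤ ENNReal.ofReal (∫ ω, f i ω ∂μ) := by
  rw [eLpNorm_one_eq_ofReal_integral (hf.integrable j) (h0 j)]
  exact ENNReal.ofReal_le_ofReal (by simpa using hf.setIntegral_le hij MeasurableSet.univ)

theorem Supermartingale.exists_ae_tendsto_of_nonneg [IsFiniteMeasure μ] {𝔉 : Filtration ℕ m}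
    {f : ℕ → Ω → ℝ} (hf : Supermartingale f 𝔉 μ) (h0 : ∀ n, 0 ≤ᵐ[μ] f n) :
    ∀ᵐ ω ∂μ, ∃ c, Tendsto (fun n => f n ω) atTop (𝓝 c) := by
  have hbdd (n : ℕ) : eLpNorm ((-f) n) 1 μ ≤ (∫ ω, f 0 ω ∂μ).toNNReal := by
    simpa [eLpNorm_neg, ENNReal.ofReal] using hf.eLpNorm_one_le_of_nonneg h0 (Nat.zero_le n)
  filter_upwards [hf.neg.exists_ae_tendsto_of_bdd hbdd] with ω ⟨c, hc⟩
  exact ⟨-c, by simpa using hc.neg⟩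

theorem supermartingale_add_tsum_nat_add [IsFiniteMeasure μ] {𝔉 : Filtration ℕ m}
    {X : ℕ → Ω → ℝ} {a : ℕ → ℝ} (ha : Summable a) (hadapted : Adapted 𝔉 X)
    (hint : ∀ t, Integrable (X t) μ) (hcond : ∀ t, μ[X (t + 1) | 𝔉 t] ≤ᵐ[μ] fun ω => X t ω + a t) :
    Supermartingale (fun t ω => X t ω + ∑' s, a (s + t)) 𝔉 μ := by
  refine supermartingale_nat (fun t => ((hadapted t).add_const _).stronglyMeasurable)
    (fun t => (hint t).add (integrable_const _)) fun t => ?_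
  have hsplit : μ[fun ω => X (t + 1) ω + ∑' s, a (s + (t + 1)) | 𝔉 t] =ᵐ[μ]
      μ[X (t + 1) | 𝔉 t] + fun _ => ∑' s, a (s + (t + 1)) := by
    rw [← condExp_const (μ := μ) (𝔉.le t) (∑' s, a (s + (t + 1)))]
    exact condExp_add (hint (t + 1)) (integrable_const _) (𝔉 t)
  filter_upwards [hsplit, hcond t] with ω hω hXω
  rw [hω, Pi.add_apply, tsum_nat_add_eq_add_tsum_nat_add_succ ha t]
  linarith

end MeasureTheory

/-- Almost-sure convergence under square-summable perturbations (stochastic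
core of Proposition 1): if `(X t)` is a nonnegative, integrable, adapted
process with `E[X (t+1) | 𝔉 t] ≤ X t + c * η t ^ 2` a.s. and `∑ η t ^ 2 < ∞`,
then `X t` converges almost surely to a nonnegative random variable. -/
theorem almost_sure_convergence_square_summable
    {Ω : Type*} {m : MeasurableSpace Ω} {μ : Measure Ω} [IsProbabilityMeasure μ]
    (𝔉 : Filtration ℕ m)
    (X : ℕ → Ω → ℝ) (c : ℝ) (hc : 0 ≤ c) (η : ℕ → ℝ)
    (hη : Summable (fun t => η t ^ 2))
    (hadapted : Adapted 𝔉 X)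
    (hint : ∀ t, Integrable (X t) μ)
    (hnonneg : ∀ t, 0 ≤ᵐ[μ] X t)
    (hcond : ∀ t, μ[X (t + 1) | 𝔉 t] ≤ᵐ[μ] fun ω => X t ω + c * η t ^ 2) :
    ∃ Xinf : Ω → ℝ, (0 ≤ᵐ[μ] Xinf) ∧
      ∀ᵐ ω ∂μ, Tendsto (fun t => X t ω) atTop (nhds (Xinf ω)) := by
  have ha : Summable fun t => c * η t ^ 2 := hη.mul_left c
  have hY := supermartingale_add_tsum_nat_add ha hadapted hint hcond
  have hY_nonneg (t : ℕ) : 0 ≤ᵐ[μ] fun ω => X t ω + ∑' s, c * η (s + t) ^ 2 := by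
    filter_upwards [hnonneg t] with ω hω
    exact add_nonneg hω (tsum_nonneg fun s => mul_nonneg hc (sq_nonneg _))
  have hconv : ∀ᵐ ω ∂μ, ∃ l, Tendsto (fun t => X t ω) atTop (𝓝 l) := by
    filter_upwards [hY.exists_ae_tendsto_of_nonneg hY_nonneg] with ω ⟨l, hl⟩
    have htail := tendsto_sum_nat_add fun t => c * η t ^ 2
    exact ⟨l, by simpa using (hl.sub htail).congr fun t => add_sub_cancel_right _ _⟩
  have hlim : ∀ᵐ ω ∂μ, Tendsto (fun t => X t ω) atTop (𝓝 (limUnder atTop fun t => X t ω)) := by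
    filter_upwards [hconv] with ω h using tendsto_nhds_limUnder h
  refine ⟨fun ω => limUnder atTop fun t => X t ω, ?_, hlim⟩
  filter_upwards [hlim, ae_all_iff.2 hnonneg] with ω h h0 using ge_of_tendsto' h h0
end

section
/- Tsallis q-integral of a multivariate Gaussian density: let d ≥ 1, let Σ be a symmetric positive-definite real d×d matrix, let μ ∈ ℝ^d, and let q > 0. Writing φ(x) := ((2π)^d · det Σ)^{−1/2} · exp(−(1/2)·⟨x − μ, Σ⁻¹(x − μ)⟩) for the Gaussian density, one has ∫_{ℝ^d} φ(x)^q dx = q^{−d/2} · (2π)^{d(1−q)/2} · (det Σ)^{(1−q)/2}. Consequently, the Tsallis entropy T_q(φ) := (1 − ∫ φ^q)/(q − 1) of the Gaussian equals (1 − exp((1−q)·Σ_{i} [½·ln(2π) + ln σ_i − ln q/(2(1−q))]))/(q−1), where σ_i² are the diagonal entries in an LDL decomposition of Σ (so that Π σ_i² = det Σ). -/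
/-!
`φ^q` is again a Gaussian kernel, with precision matrix `q Σ⁻¹`, times the constant
`((2π)^d det Σ)^(-q/2)`. The Gaussian integral `∫ exp(-½⟨x, A x⟩) = (2π)^(d/2) (det A)^(-1/2)`
follows by substituting `y = A^(1/2) x`, which turns the integrand into a product of
one-dimensional Gaussians, and `det (q Σ⁻¹) = q^d / det Σ` then gives the formula. The entropy
formula is the same constant written as the exponential of a sum of logarithms.
-/

open MeasureTheory Matrix Real

section GaussianIntegral

variable {ι : Type*} [Fintype ι]

theorem integral_comp_mulVec [DecidableEq ι] {E : Type*} [NormedAddCommGroup E]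
    [NormedSpace ℝ E] (T : Matrix ι ι ℝ) (hT : T.det ≠ 0) (g : (ι → ℝ) → E) :
    ∫ y, g (T *ᵥ y) = |T.det|⁻¹ • ∫ x, g x := by
  have hdet : LinearMap.det (toLin' T) ≠ 0 := by rwa [LinearMap.det_toLin']
  have hemb : MeasurableEmbedding (T *ᵥ ·) :=
    ((toLin' T).toContinuousLinearMap.toContinuousLinearEquivOfDetNeZero
      hdet).toHomeomorph.measurableEmbedding
  have hmap : Measure.map (T *ᵥ ·) volume = ENNReal.ofReal |T.det|⁻¹ • volume := by
    have h := Measure.map_linearMap_addHaar_eq_smul_addHaar volume hdet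
    rwa [LinearMap.det_toLin', abs_inv] at h
  rw [← hemb.integral_map, hmap, integral_smul_measure, ENNReal.toReal_ofReal (by positivity)]


theorem integral_exp_neg_half_dotProduct_self :
    ∫ y : ι → ℝ, exp (-(1 / 2) * (y ⬝ᵥ y)) = (2 * π) ^ (Fintype.card ι / 2 : ℝ) := by
  have hprod : ∀ y : ι → ℝ, exp (-(1 / 2) * (y ⬝ᵥ y)) = ∏ i, exp (-(1 / 2) * y i ^ 2) := by
    intro y
    simp only [dotProduct, Finset.mul_sum, ← exp_sum, sq]
  simp_rw [hprod]
  rw [integral_fintype_prod_volume_eq_pow (fun t : ℝ => exp (-(1 / 2) * t ^ 2)),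
    integral_gaussian, sqrt_eq_rpow, ← rpow_natCast, ← rpow_mul (by positivity)]
  congr 1 <;> ring

open scoped MatrixOrder in
theorem integral_exp_neg_half_dotProduct_mulVec [DecidableEq ι] {A : Matrix ι ι ℝ}
    (hA : A.PosDef) :
    ∫ x, exp (-(1 / 2) * (x ⬝ᵥ A *ᵥ x))
      = (2 * π) ^ (Fintype.card ι / 2 : ℝ) * A.det ^ (-(1 / 2) : ℝ) := by
  set T := CFC.sqrt A
  have hT : T.PosSemidef := (CFC.sqrt_nonneg A).posSemidef
  have hTT : T * T = A := CFC.sqrt_mul_sqrt_self A hA.posSemidef.nonneg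
  have hdetT : T.det = √A.det := by simpa using hA.posSemidef.det_sqrt
  have hTsymm : Tᵀ = T := IsSymm.eq hT.isHermitian
  have hquad : ∀ x, x ⬝ᵥ A *ᵥ x = T *ᵥ x ⬝ᵥ T *ᵥ x := fun x => by
    rw [← hTT, ← mulVec_mulVec, dotProduct_mulVec, ← mulVec_transpose, hTsymm]
  have hT₀ : T.det ≠ 0 := by rw [hdetT]; exact (sqrt_pos.2 hA.det_pos).ne'
  simp_rw [hquad]
  rw [integral_comp_mulVec T hT₀ (fun y => exp (-(1 / 2) * (y ⬝ᵥ y))),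
    integral_exp_neg_half_dotProduct_self, hdetT, abs_of_nonneg (sqrt_nonneg _), sqrt_eq_rpow,
    ← rpow_neg hA.det_pos.le, smul_eq_mul, mul_comm]

end GaussianIntegral

section GaussianDensity

variable {ι : Type*} [Fintype ι] [DecidableEq ι]

noncomputable def gaussianDensity (S : Matrix ι ι ℝ) (m x : ι → ℝ) : ℝ :=
  ((2 * π) ^ Fintype.card ι * S.det) ^ (-(1 / 2 : ℝ)) *
    exp (-(1 / 2) * ((x - m) ⬝ᵥ S⁻¹ *ᵥ (x - m)))

theorem gaussianDensity_rpow {S : Matrix ι ι ℝ} (hS : 0 ≤ S.det) (m x : ι → ℝ) (q : ℝ) :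
    gaussianDensity S m x ^ q = ((2 * π) ^ Fintype.card ι * S.det) ^ (-(q / 2)) *
      exp (-(1 / 2) * ((x - m) ⬝ᵥ (q • S⁻¹) *ᵥ (x - m))) := by
  have hbase : 0 ≤ (2 * π) ^ Fintype.card ι * S.det := by positivity
  rw [gaussianDensity, mul_rpow (rpow_nonneg hbase _) (exp_pos _).le, ← rpow_mul hbase,
    ← exp_mul, smul_mulVec, dotProduct_smul, smul_eq_mul]
  congr 2 <;> ring

theorem integral_gaussianDensity_rpow {S : Matrix ι ι ℝ} (hS : S.PosDef) (m : ι → ℝ) {q : ℝ}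
    (hq : 0 < q) :
    ∫ x, gaussianDensity S m x ^ q = q ^ (-(Fintype.card ι : ℝ) / 2) *
      (2 * π) ^ ((Fintype.card ι : ℝ) * (1 - q) / 2) * S.det ^ ((1 - q) / 2) := by
  have hS₀ := hS.det_pos
  have hdet : (q • S⁻¹).det = q ^ Fintype.card ι * S.det⁻¹ := by
    rw [det_smul, det_nonsing_inv, Ring.inverse_eq_inv]
  simp_rw [gaussianDensity_rpow hS₀.le]
  rw [integral_const_mul,
    integral_sub_right_eq_self (fun x => exp (-(1 / 2) * (x ⬝ᵥ (q • S⁻¹) *ᵥ x))) m,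
    integral_exp_neg_half_dotProduct_mulVec (hS.inv.smul hq), hdet]
  have h2π : 0 < 2 * π := by positivity
  rw [rpow_def_of_pos (by positivity), rpow_def_of_pos h2π, rpow_def_of_pos (by positivity),
    rpow_def_of_pos hq, rpow_def_of_pos h2π, rpow_def_of_pos hS₀]
  simp only [← exp_add]
  congr 1
  rw [log_mul (pow_pos h2π _).ne' hS₀.ne', log_mul (pow_pos hq _).ne' (inv_pos.2 hS₀).ne',
    log_pow, log_pow, log_inv]
  ring

end GaussianDensity

theorem tsallis_constant_eq_exp_sum_log {ι : Type*} [Fintype ι] {q : ℝ} (hq : 0 < q)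
    (hq1 : q ≠ 1) {σ : ι → ℝ} (hσ : ∀ i, 0 < σ i) :
    q ^ (-(Fintype.card ι : ℝ) / 2) * (2 * π) ^ ((Fintype.card ι : ℝ) * (1 - q) / 2) *
        (∏ i, σ i ^ 2) ^ ((1 - q) / 2)
      = exp ((1 - q) * ∑ i, (log (2 * π) / 2 + log (σ i) - log q / (2 * (1 - q)))) := by
  have h1q : 1 - q ≠ 0 := sub_ne_zero.2 hq1.symm
  rw [rpow_def_of_pos hq, rpow_def_of_pos (by positivity),
    rpow_def_of_pos (Finset.prod_pos fun i _ => pow_pos (hσ i) 2), ← exp_add, ← exp_add,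
    log_prod fun i _ => (pow_pos (hσ i) 2).ne']
  congr 1
  simp only [log_pow, Finset.sum_sub_distrib, Finset.sum_add_distrib, Finset.sum_const,
    Finset.card_univ, nsmul_eq_mul, ← Finset.mul_sum]
  field_simp
  ring

theorem gaussian_tsallis_integral_general (d : ℕ)
    (S : Matrix (Fin d) (Fin d) ℝ) (hS : S.PosDef)
    (m : Fin d → ℝ) (q : ℝ) (hq : 0 < q)
    (φ : (Fin d → ℝ) → ℝ)
    (hφ : ∀ x, φ x = ((2 * Real.pi) ^ d * S.det) ^ (-(1 / 2 : ℝ)) *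
      Real.exp (-(1 / 2) * dotProduct (x - m) (S⁻¹.mulVec (x - m)))) :
    (∫ x : Fin d → ℝ, φ x ^ q)
        = q ^ (-(d : ℝ) / 2) * (2 * Real.pi) ^ ((d : ℝ) * (1 - q) / 2)
          * S.det ^ ((1 - q) / 2) ∧
      ∀ σ : Fin d → ℝ, (∀ i, 0 < σ i) → (∏ i, σ i ^ 2) = S.det → q ≠ 1 →
        (1 - ∫ x : Fin d → ℝ, φ x ^ q) / (q - 1)
          = (1 - Real.exp ((1 - q) * ∑ i, (Real.log (2 * Real.pi) / 2
              + Real.log (σ i) - Real.log q / (2 * (1 - q))))) / (q - 1) := by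
  have hφ_eq : φ = gaussianDensity S m := funext fun x => by
    rw [hφ, gaussianDensity, Fintype.card_fin]
  have hint : ∫ x, φ x ^ q
      = q ^ (-(d : ℝ) / 2) * (2 * π) ^ ((d : ℝ) * (1 - q) / 2) * S.det ^ ((1 - q) / 2) := by
    simpa only [hφ_eq, Fintype.card_fin] using integral_gaussianDensity_rpow hS m hq
  refine ⟨hint, fun σ hσ hσS hq1 => ?_⟩
  rw [hint, ← hσS]
  simpa only [Fintype.card_fin] using congrArg (fun t => (1 - t) / (q - 1))
    (tsallis_constant_eq_exp_sum_log (ι := Fin d) hq hq1 hσ)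

/-- Tsallis `q`-integral of a multivariate Gaussian density:
`∫ φ^q = q^(-d/2) * (2π)^(d(1-q)/2) * (det Σ)^((1-q)/2)`, and the resulting
formula for the Tsallis entropy `(1 - ∫ φ^q)/(q - 1)` in terms of the diagonal
entries `σ_i²` of an LDL decomposition of `Σ` (so that `∏ σ_i² = det Σ`). -/
theorem gaussian_tsallis_integral (d : ℕ) (hd : 1 ≤ d)
    (S : Matrix (Fin d) (Fin d) ℝ) (hS : S.PosDef)
    (m : Fin d → ℝ) (q : ℝ) (hq : 0 < q)
    (φ : (Fin d → ℝ) → ℝ)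
    (hφ : ∀ x, φ x = ((2 * Real.pi) ^ d * S.det) ^ (-(1 / 2 : ℝ)) *
      Real.exp (-(1 / 2) * dotProduct (x - m) (S⁻¹.mulVec (x - m)))) :
    (∫ x : Fin d → ℝ, φ x ^ q)
        = q ^ (-(d : ℝ) / 2) * (2 * Real.pi) ^ ((d : ℝ) * (1 - q) / 2)
          * S.det ^ ((1 - q) / 2) ∧
      ∀ σ : Fin d → ℝ, (∀ i, 0 < σ i) → (∏ i, σ i ^ 2) = S.det → q ≠ 1 →
        (1 - ∫ x : Fin d → ℝ, φ x ^ q) / (q - 1)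
          = (1 - Real.exp ((1 - q) * ∑ i, (Real.log (2 * Real.pi) / 2
              + Real.log (σ i) - Real.log q / (2 * (1 - q))))) / (q - 1) :=
  gaussian_tsallis_integral_general d S hS m q hq φ hφ
end
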